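/- arXiv:2208.12407 — 2 statements merged into one kernel-verified Lean document; each statement's English description precedes it below -/
import Mathlib

section
/- Let n ≥ 1 and let A, B ∈ ℙ_n. Then for all s, t ∈ ℝ: d(A ♮_s B, A ♮_t B) = |s − t| · d(A, B). That is, the curve t ↦ A ♮_t B is a geodesic for the semi-metric d. -/
open Matrix
open scoped ComplexOrder

/-- Real power `A^t = exp(t · log A)` of a Hermitian positive definite matrix, defined via
the functional calculus (spectral decomposition). -/
noncomputable def mpow {n : ℕ} (A : Matrix (Fin n) (Fin n) ℂ) (t : ℝ) :
    Matrix (Fin n) (Fin n) ℂ :=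
  if hA : A.IsHermitian then
    (hA.eigenvectorUnitary : Matrix (Fin n) (Fin n) ℂ) *
      Matrix.diagonal (fun i => ((hA.eigenvalues i ^ t : ℝ) : ℂ)) *
      (star (hA.eigenvectorUnitary : Matrix (Fin n) (Fin n) ℂ))
  else A

/-- Logarithm of a Hermitian positive definite matrix via the functional calculus. -/
noncomputable def mlog {n : ℕ} (A : Matrix (Fin n) (Fin n) ℂ) : Matrix (Fin n) (Fin n) ℂ :=
  if hA : A.IsHermitian then
    (hA.eigenvectorUnitary : Matrix (Fin n) (Fin n) ℂ) *
      Matrix.diagonal (fun i => ((Real.log (hA.eigenvalues i) : ℝ) : ℂ)) *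
      (star (hA.eigenvectorUnitary : Matrix (Fin n) (Fin n) ℂ))
  else A

/-- Metric geometric mean `A # B = A^{1/2} (A^{-1/2} B A^{-1/2})^{1/2} A^{1/2}`. -/
noncomputable def geomMean {n : ℕ} (A B : Matrix (Fin n) (Fin n) ℂ) :
    Matrix (Fin n) (Fin n) ℂ :=
  mpow A (1/2) * mpow (mpow A (-(1/2)) * B * mpow A (-(1/2))) (1/2) * mpow A (1/2)

/-- Weighted spectral geometric mean `A ♮_t B = (A⁻¹ # B)^t A (A⁻¹ # B)^t`. -/
noncomputable def spectralMean {n : ℕ} (t : ℝ) (A B : Matrix (Fin n) (Fin n) ℂ) :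
    Matrix (Fin n) (Fin n) ℂ :=
  mpow (geomMean A⁻¹ B) t * A * mpow (geomMean A⁻¹ B) t

/-- The operator norm (largest singular value) of a matrix, i.e. the norm of the induced
continuous linear endomorphism of Euclidean space. -/
noncomputable def opNorm {n : ℕ} (M : Matrix (Fin n) (Fin n) ℂ) : ℝ :=
  ‖Matrix.toEuclideanCLM (𝕜 := ℂ) M‖

/-- The semi-metric `d(A, B) = 2 ‖log (A⁻¹ # B)‖`. -/
noncomputable def smetric {n : ℕ} (A B : Matrix (Fin n) (Fin n) ℂ) : ℝ :=
  2 * opNorm (mlog (geomMean A⁻¹ B))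

/-!
Put `G = A⁻¹ # B`, so that `A ♮_t B = G^t A G^t = G^{t-s} (A ♮_s B) G^{t-s}`. The geometric
mean solves the Riccati equation, `X⁻¹ # (G X G) = G` for all positive definite `X` and `G`;
applied to `X = A ♮_s B` and `G^{t-s}` it gives `(A ♮_s B)⁻¹ # (A ♮_t B) = G^{t-s}`, whose
logarithm is `(t - s) log G`.
-/

open scoped MatrixOrder

lemma Matrix.PosDef.mul_mul_of_posDef {ι 𝕜 : Type*} [Fintype ι] [DecidableEq ι] [RCLike 𝕜]
    {A B : Matrix ι ι 𝕜} (hA : A.PosDef) (hB : B.PosDef) : (B * A * B).PosDef := by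
  simpa [hB.1.eq] using hA.conjTranspose_mul_mul_same (mulVec_injective_of_isUnit hB.isUnit)

lemma opNorm_real_smul {n : ℕ} (r : ℝ) (M : Matrix (Fin n) (Fin n) ℂ) :
    opNorm (r • M) = |r| * opNorm M := by
  rw [opNorm, ← Complex.coe_smul, map_smul, norm_smul, Complex.norm_real, Real.norm_eq_abs, opNorm]

section FunctionalCalculus

variable {n : ℕ} {C : Matrix (Fin n) (Fin n) ℂ}

lemma continuousOn_spectrum_real (C : Matrix (Fin n) (Fin n) ℂ) (f : ℝ → ℝ) :
    ContinuousOn f (spectrum ℝ C) :=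
  (Matrix.finite_real_spectrum (A := C)).continuousOn f

lemma mpow_eq_cfc (hC : C.IsHermitian) (t : ℝ) : mpow C t = cfc (fun x : ℝ => x ^ t) C := by
  rw [hC.cfc_eq, mpow, dif_pos hC]
  rfl

lemma mlog_eq_cfc (hC : C.IsHermitian) : mlog C = cfc Real.log C := by
  rw [hC.cfc_eq, mlog, dif_pos hC]
  rfl

variable (hC : C.PosDef)
include hC

lemma mpow_posDef (t : ℝ) : (mpow C t).PosDef := by
  rw [mpow_eq_cfc hC.1]
  refine ((cfc_isStrictlyPositive_iff _ C (continuousOn_spectrum_real C _)).mpr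
    fun x hx => ?_).posDef
  exact Real.rpow_pos_of_pos (hC.isStrictlyPositive.spectrum_pos hx) t

lemma mpow_add (r s : ℝ) : mpow C (r + s) = mpow C r * mpow C s := by
  rw [mpow_eq_cfc hC.1, mpow_eq_cfc hC.1, mpow_eq_cfc hC.1,
    ← cfc_mul _ _ C (continuousOn_spectrum_real C _) (continuousOn_spectrum_real C _)]
  exact cfc_congr fun x hx => Real.rpow_add (hC.isStrictlyPositive.spectrum_pos hx) r s

lemma mpow_zero : mpow C 0 = 1 := by
  simp only [mpow_eq_cfc hC.1, Real.rpow_zero]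
  exact cfc_const_one ℝ C

lemma mpow_one : mpow C 1 = C := by
  simp only [mpow_eq_cfc hC.1, Real.rpow_one]
  exact cfc_id' ℝ C

lemma mpow_mul (r s : ℝ) : mpow C (r * s) = mpow (mpow C r) s := by
  rw [mpow_eq_cfc (mpow_posDef hC r).1, mpow_eq_cfc hC.1, mpow_eq_cfc hC.1,
    ← cfc_comp _ _ C (hg := (C.finite_real_spectrum.image _).continuousOn _)
      (hf := continuousOn_spectrum_real C _)]
  exact cfc_congr fun x hx => Real.rpow_mul (hC.isStrictlyPositive.spectrum_pos hx).le r s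

lemma mlog_mpow (t : ℝ) : mlog (mpow C t) = t • mlog C := by
  rw [mlog_eq_cfc (mpow_posDef hC t).1, mpow_eq_cfc hC.1, mlog_eq_cfc hC.1,
    ← cfc_comp _ _ C (hg := (C.finite_real_spectrum.image _).continuousOn _)
      (hf := continuousOn_spectrum_real C _),
    ← cfc_const_mul t _ C (continuousOn_spectrum_real C _)]
  exact cfc_congr fun x hx => Real.log_rpow (hC.isStrictlyPositive.spectrum_pos hx) t

lemma mpow_neg_mul_mpow (t : ℝ) : mpow C (-t) * mpow C t = 1 := by
  rw [← mpow_add hC, neg_add_cancel, mpow_zero hC]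

lemma mpow_mul_mpow_neg (t : ℝ) : mpow C t * mpow C (-t) = 1 := by
  rw [← mpow_add hC, add_neg_cancel, mpow_zero hC]

lemma mpow_half_mul_mpow_half : mpow C (1/2) * mpow C (1/2) = C := by
  rw [← mpow_add hC]
  norm_num [mpow_one hC]

lemma mpow_mul_self_half : mpow (C * C) (1/2) = C := by
  rw [← mpow_one hC, ← mpow_add hC, ← mpow_mul hC]
  norm_num

lemma mpow_inv (t : ℝ) : mpow C⁻¹ t = mpow C (-t) := by
  have hinv : C⁻¹ = mpow C (-1) :=
    Matrix.inv_eq_left_inv (by simpa [mpow_one hC] using mpow_neg_mul_mpow hC 1)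
  rw [hinv, ← mpow_mul hC, neg_one_mul]

end FunctionalCalculus

section GeometricMean

variable {n : ℕ}

lemma geomMean_posDef {X Y : Matrix (Fin n) (Fin n) ℂ} (hX : X.PosDef) (hY : Y.PosDef) :
    (geomMean X Y).PosDef :=
  ((mpow_posDef (hY.mul_mul_of_posDef (mpow_posDef hX _)) _).mul_mul_of_posDef
    (mpow_posDef hX _))

lemma geomMean_inv_mul_mul {X G : Matrix (Fin n) (Fin n) ℂ} (hX : X.PosDef) (hG : G.PosDef) :
    geomMean X⁻¹ (G * X * G) = G := by
  set P := mpow X (1/2)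
  have hPGP : (P * G * P).PosDef := hG.mul_mul_of_posDef (mpow_posDef hX _)
  have hsquare : P * (G * X * G) * P = (P * G * P) * (P * G * P) := by
    have hX' : X = P * P := (mpow_half_mul_mpow_half hX).symm
    rw [hX']
    simp only [Matrix.mul_assoc]
  calc geomMean X⁻¹ (G * X * G)
      = mpow X (-(1/2)) * mpow (P * (G * X * G) * P) (1/2) * mpow X (-(1/2)) := by
        rw [geomMean, mpow_inv hX, mpow_inv hX, neg_neg]
    _ = (mpow X (-(1/2)) * P) * G * (P * mpow X (-(1/2))) := by
        rw [hsquare, mpow_mul_self_half hPGP]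
        simp only [Matrix.mul_assoc]
    _ = G := by
        rw [mpow_neg_mul_mpow hX, mpow_mul_mpow_neg hX, Matrix.one_mul, Matrix.mul_one]

end GeometricMean

section SpectralMean

variable {n : ℕ} {A B : Matrix (Fin n) (Fin n) ℂ}

lemma spectralMean_eq_mpow_mul_spectralMean_mul (hG : (geomMean A⁻¹ B).PosDef) (s t : ℝ) :
    spectralMean t A B =
      mpow (geomMean A⁻¹ B) (t - s) * spectralMean s A B * mpow (geomMean A⁻¹ B) (t - s) := by
  simp only [spectralMean, Matrix.mul_assoc, ← mpow_add hG, add_sub_cancel]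
  simp only [← Matrix.mul_assoc, ← mpow_add hG, sub_add_cancel]

lemma geomMean_inv_spectralMean (hA : A.PosDef) (hB : B.PosDef) (s t : ℝ) :
    geomMean (spectralMean s A B)⁻¹ (spectralMean t A B) = mpow (geomMean A⁻¹ B) (t - s) := by
  have hG := geomMean_posDef hA.inv hB
  rw [spectralMean_eq_mpow_mul_spectralMean_mul hG s t,
    geomMean_inv_mul_mul (X := spectralMean s A B) (hA.mul_mul_of_posDef (mpow_posDef hG s))
      (mpow_posDef hG _)]

end SpectralMean

theorem spectralMean_geodesic_general {n : ℕ} (A B : Matrix (Fin n) (Fin n) ℂ)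
    (hA : A.PosDef) (hB : B.PosDef) (s t : ℝ) :
    smetric (spectralMean s A B) (spectralMean t A B) = |s - t| * smetric A B := by
  rw [smetric, geomMean_inv_spectralMean hA hB, mlog_mpow (geomMean_posDef hA.inv hB),
    opNorm_real_smul, smetric, abs_sub_comm]
  ring

theorem spectralMean_geodesic {n : ℕ} (hn : 1 ≤ n) (A B : Matrix (Fin n) (Fin n) ℂ)
    (hA : A.PosDef) (hB : B.PosDef) (s t : ℝ) :
    smetric (spectralMean s A B) (spectralMean t A B) = |s - t| * smetric A B :=
  spectralMean_geodesic_general A B hA hB s t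
end

section
/- Let n ≥ 1, let A, B ∈ ℙ_n with A B ≠ B A, and let t ∈ (0,1). Then there do not exist real numbers x > 0 and y > 0 such that A ♮_t B = x A + y B. -/
open Matrix
open scoped ComplexOrder

/-!
Put `C = A⁻¹ # B`; it is positive definite and solves the Riccati equation `C A C = B`, so the
identity reads `C^t A C^t = x A + y C A C`. In an eigenbasis of `C`, with eigenvalues `μᵢ`, the
`(i, j)` entry says `(μᵢ μⱼ)^t = x + y μᵢ μⱼ` whenever the `(i, j)` entry of `A` in that basis
is nonzero. The diagonal entries of `A` are positive, so a nonzero off-diagonal entry would make the strictly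
concave function `s ↦ s^t` agree with an affine function at the three points `μᵢ² < μᵢ μⱼ < μⱼ²`
unless `μᵢ = μⱼ`. Hence `C` commutes with `A`, and so does `B = C A C`.
-/

open Unitary

theorem StrictConcaveOn.false_of_eq_affine {f : ℝ → ℝ} {s : Set ℝ} (hf : StrictConcaveOn ℝ s f)
    {x y a b c : ℝ} (ha : a ∈ s) (hc : c ∈ s) (hab : a < b) (hbc : b < c)
    (hfa : f a = x + y * a) (hfb : f b = x + y * b) (hfc : f c = x + y * c) : False := by
  have := hf.slope_anti_adjacent ha hc hab hbc
  rw [hfa, hfb, hfc] at this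
  have hcb : c - b ≠ 0 := sub_ne_zero.mpr hbc.ne'
  have hba : b - a ≠ 0 := sub_ne_zero.mpr hab.ne'
  rw [show x + y * c - (x + y * b) = y * (c - b) by ring,
    show x + y * b - (x + y * a) = y * (b - a) by ring, mul_div_cancel_right₀ _ hcb,
    mul_div_cancel_right₀ _ hba] at this
  exact lt_irrefl _ this

theorem eq_of_rpow_eq_affine {t x y p q : ℝ} (ht₀ : 0 < t) (ht₁ : t < 1) (hp : 0 < p) (hq : 0 < q)
    (hpp : (p * p) ^ t = x + y * (p * p)) (hpq : (p * q) ^ t = x + y * (p * q))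
    (hqq : (q * q) ^ t = x + y * (q * q)) : p = q := by
  wlog hlt : p < q generalizing p q
  · rcases (not_lt.mp hlt).eq_or_lt with h | h
    · exact h.symm
    · exact (this hq hp hqq (by rwa [mul_comm]) hpp h).symm
  exact ((Real.strictConcaveOn_rpow ht₀ ht₁).false_of_eq_affine (Set.mem_Ici.mpr (by positivity))
    (Set.mem_Ici.mpr (by positivity))
    (mul_lt_mul_of_pos_left hlt hp) (mul_lt_mul_of_pos_right hlt hq) hpp hpq hqq).elim

namespace Matrix

theorem commute_diagonal_of_rpow_sandwich {ι : Type*} [Fintype ι] [DecidableEq ι]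
    {M : Matrix ι ι ℂ} (hM : ∀ i, M i i ≠ 0) {μ : ι → ℝ} (hμ : ∀ i, 0 < μ i) {t x y : ℝ}
    (ht₀ : 0 < t) (ht₁ : t < 1)
    (h : diagonal (fun i => ((μ i ^ t : ℝ) : ℂ)) * M * diagonal (fun i => ((μ i ^ t : ℝ) : ℂ)) =
      x • M + y • (diagonal (fun i => (μ i : ℂ)) * M * diagonal (fun i => (μ i : ℂ)))) :
    Commute (diagonal fun i => (μ i : ℂ)) M := by
  have hroot : ∀ i j, M i j ≠ 0 → (μ i * μ j) ^ t = x + y * (μ i * μ j) := by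
    intro i j hij
    have hij' := congrFun (congrFun h i) j
    simp only [mul_diagonal, diagonal_mul, add_apply, smul_apply, Complex.real_smul] at hij'
    rw [Real.mul_rpow (hμ i).le (hμ j).le]
    have hcoe : ((μ i ^ t * μ j ^ t : ℝ) : ℂ) = ((x + y * (μ i * μ j) : ℝ) : ℂ) :=
      mul_right_cancel₀ hij (by push_cast; linear_combination hij')
    exact_mod_cast hcoe
  have hconst : ∀ i j, M i j ≠ 0 → μ i = μ j := fun i j hij =>
    eq_of_rpow_eq_affine ht₀ ht₁ (hμ i) (hμ j) (hroot i i (hM i)) (hroot i j hij)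
      (hroot j j (hM j))
  ext i j
  simp only [mul_diagonal, diagonal_mul]
  by_cases hij : M i j = 0
  · simp [hij]
  · rw [hconst i j hij, mul_comm]

end Matrix

section MatrixPower

variable {n : ℕ} {A : Matrix (Fin n) (Fin n) ℂ}

theorem mpow_eq_conjStarAlgAut (hA : A.IsHermitian) (t : ℝ) :
    mpow A t = conjStarAlgAut ℝ _ hA.eigenvectorUnitary
      (diagonal fun i => ((hA.eigenvalues i ^ t : ℝ) : ℂ)) := by
  rw [mpow, dif_pos hA, conjStarAlgAut_apply]

theorem mpow_zero_s15 (hA : A.IsHermitian) : mpow A 0 = 1 := by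
  simp only [mpow_eq_conjStarAlgAut hA, Real.rpow_zero, Complex.ofReal_one, diagonal_one, map_one]

theorem mpow_one_s15 (hA : A.IsHermitian) : mpow A 1 = A := by
  conv_rhs => rw [hA.spectral_theorem]
  simp only [mpow_eq_conjStarAlgAut hA, Real.rpow_one, conjStarAlgAut_apply]
  rfl

theorem mpow_mul_mpow (hA : A.PosDef) (s t : ℝ) : mpow A s * mpow A t = mpow A (s + t) := by
  simp only [mpow_eq_conjStarAlgAut hA.1, ← map_mul, diagonal_mul_diagonal,
    Real.rpow_add (hA.eigenvalues_pos _), Complex.ofReal_mul]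

theorem Matrix.PosDef.mpow (hA : A.PosDef) (t : ℝ) : (mpow A t).PosDef := by
  rw [mpow_eq_conjStarAlgAut hA.1, conjStarAlgAut_apply]
  refine (IsUnit.posDef_star_right_conjugate_iff isUnit_coe).mpr (PosDef.diagonal fun i => ?_)
  exact_mod_cast Real.rpow_pos_of_pos (hA.eigenvalues_pos i) t

theorem mpow_neg_one (hA : A.PosDef) : mpow A (-1) = A⁻¹ := by
  have h : mpow A (-1) * mpow A 1 = 1 := by rw [mpow_mul_mpow hA, neg_add_cancel, mpow_zero_s15 hA.1]
  rw [mpow_one_s15 hA.1] at h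
  exact (inv_eq_left_inv h).symm

end MatrixPower

theorem Matrix.PosDef.conjugate {ι 𝕜 : Type*} [Fintype ι] [DecidableEq ι] [RCLike 𝕜]
    {X Y : Matrix ι ι 𝕜} (hY : Y.PosDef) (hX : X.PosDef) : (X * Y * X).PosDef := by
  simpa only [star_eq_conjTranspose, hX.1.eq] using
    (IsUnit.posDef_star_right_conjugate_iff hX.isUnit).mpr hY

section GeometricMean

variable {n : ℕ}

theorem Matrix.PosDef.geomMean {P B : Matrix (Fin n) (Fin n) ℂ} (hP : P.PosDef) (hB : B.PosDef) :
    (geomMean P B).PosDef :=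
  ((hB.conjugate (hP.mpow _)).mpow _).conjugate (hP.mpow _)

theorem geomMean_mul_inv_mul_geomMean {P B : Matrix (Fin n) (Fin n) ℂ} (hP : P.PosDef)
    (hB : B.PosDef) : geomMean P B * P⁻¹ * geomMean P B = B := by
  set Q := mpow P (1 / 2)
  set R := mpow P (-(1 / 2))
  set T := mpow (R * B * R) (1 / 2)
  have hS : (R * B * R).PosDef := hB.conjugate (hP.mpow _)
  have hQR : Q * R = 1 := by rw [mpow_mul_mpow hP, add_neg_cancel, mpow_zero_s15 hP.1]
  have hRQ : R * Q = 1 := by rw [mpow_mul_mpow hP, neg_add_cancel, mpow_zero_s15 hP.1]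
  have hRR : R * R = P⁻¹ := by rw [mpow_mul_mpow hP, ← mpow_neg_one hP]; norm_num
  have hTT : T * T = R * B * R := by rw [mpow_mul_mpow hS]; norm_num [mpow_one_s15 hS.1]
  calc Q * T * Q * P⁻¹ * (Q * T * Q) = Q * T * (Q * R) * (R * Q) * T * Q := by
        rw [← hRR]; noncomm_ring
    _ = Q * (T * T) * Q := by rw [hQR, hRQ]; noncomm_ring
    _ = (Q * R) * B * (R * Q) := by rw [hTT]; noncomm_ring
    _ = B := by rw [hQR, hRQ, one_mul, mul_one]

end GeometricMean

theorem commute_of_mpow_mul_mul_mpow_eq {n : ℕ} {A C : Matrix (Fin n) (Fin n) ℂ} (hA : A.PosDef)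
    (hC : C.PosDef) {t x y : ℝ} (ht₀ : 0 < t) (ht₁ : t < 1)
    (h : mpow C t * A * mpow C t = x • A + y • (C * A * C)) : Commute C A := by
  set φ := conjStarAlgAut ℝ (Matrix (Fin n) (Fin n) ℂ) hC.1.eigenvectorUnitary
  set A' := φ.symm A
  have hA' : A = φ A' := (φ.apply_symm_apply A).symm
  have hC' : C = φ (diagonal fun i => (hC.1.eigenvalues i : ℂ)) := hC.1.spectral_theorem
  have hA'pd : A'.PosDef := (IsUnit.posDef_star_left_conjugate_iff isUnit_coe).mpr hA
  have hsandwich : diagonal (fun i => ((hC.1.eigenvalues i ^ t : ℝ) : ℂ)) * A' *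
      diagonal (fun i => ((hC.1.eigenvalues i ^ t : ℝ) : ℂ)) =
      x • A' + y • (diagonal (fun i => (hC.1.eigenvalues i : ℂ)) * A' *
        diagonal (fun i => (hC.1.eigenvalues i : ℂ))) := by
    apply EquivLike.injective φ
    rw [map_mul, map_mul, map_add, map_smul, map_smul, map_mul, map_mul, ← hA', ← hC',
      ← mpow_eq_conjStarAlgAut, h]
  rw [hA', hC']
  exact (commute_diagonal_of_rpow_sandwich (fun i => hA'pd.diag_pos.ne') hC.eigenvalues_pos
    ht₀ ht₁ hsandwich).map φ

theorem spectralMean_not_linear_sum_general {n : ℕ} (A B : Matrix (Fin n) (Fin n) ℂ)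
    (hA : A.PosDef) (hB : B.PosDef) (hAB : A * B ≠ B * A) (t : ℝ) (ht : t ∈ Set.Ioo (0 : ℝ) 1) :
    ¬∃ x y : ℝ, 0 < x ∧ 0 < y ∧ spectralMean t A B = x • A + y • B := by
  rintro ⟨x, y, -, -, hxy⟩
  set C := geomMean A⁻¹ B
  have hCAC : C * A * C = B := by
    simpa only [nonsing_inv_nonsing_inv _ ((isUnit_iff_isUnit_det A).mp hA.isUnit)] using
      geomMean_mul_inv_mul_geomMean hA.inv hB
  have hsum : mpow C t * A * mpow C t = x • A + y • (C * A * C) := by rw [hCAC]; exact hxy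
  have hCA := commute_of_mpow_mul_mul_mpow_eq hA (hA.inv.geomMean hB) ht.1 ht.2 hsum
  rw [← hCAC] at hAB
  exact hAB ((hCA.symm.mul_right (Commute.refl A)).mul_right hCA.symm).eq

theorem spectralMean_not_linear_sum {n : ℕ} (hn : 1 ≤ n) (A B : Matrix (Fin n) (Fin n) ℂ)
    (hA : A.PosDef) (hB : B.PosDef) (hAB : A * B ≠ B * A) (t : ℝ) (ht : t ∈ Set.Ioo (0 : ℝ) 1) :
    ¬∃ x y : ℝ, 0 < x ∧ 0 < y ∧ spectralMean t A B = x • A + y • B :=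
  spectralMean_not_linear_sum_general A B hA hB hAB t ht
end
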